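/- The fundamental Demazure atoms {Ã_α}, indexed by weak compositions α, form a basis of the polynomial ring ℂ[x_1,...,x_n]. -/

import Mathlib

open MvPolynomial
open scoped Classical

open scoped Classical in
/-- The fundamental shift of a weak composition `v`: working right to left, any
positive entry `a` of `v` with a `0` immediately to its left is reduced to `1`,
and the remaining `a − 1` is shifted left so as to sit immediately to the right
of the next nonzero entry to its left (or into position `1` if there is none);
positive entries with a nonzero entry immediately to the left are unchanged,
and all other entries are `0`. -/
noncomputable def qshift (n : ℕ) (v : Fin n → ℕ) : Fin n → ℕ := fun p =>
  if v p ≠ 0 then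
    (if (p : ℕ) = 0 ∨ v ⟨(p : ℕ) - 1, by omega⟩ ≠ 0 then v p else 1)
  else
    if (p : ℕ) = 0 ∨ v ⟨(p : ℕ) - 1, by omega⟩ ≠ 0 then
      (if h : (Finset.univ.filter fun q : Fin n => p < q ∧ v q ≠ 0).Nonempty then
        v ((Finset.univ.filter fun q : Fin n => p < q ∧ v q ≠ 0).min' h) - 1
      else 0)
    else 0

/-- Dominance order on weak compositions of length `n`: `Dom n β γ` means every
partial sum of `β` is at most the corresponding partial sum of `γ`
(i.e. `β ⊴ γ`). -/
def Dom (n : ℕ) (β γ : Fin n → ℕ) : Prop :=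
  ∀ j : Fin n, ∑ p ∈ Finset.univ.filter (· ≤ j), β p
    ≤ ∑ p ∈ Finset.univ.filter (· ≤ j), γ p

/-- The fundamental Demazure atom (fundamental particle) of a weak composition
`α`: `Ã_α = Σ_{α ⊴ β ⊴ qshift(α)} x^β`.  Every such `β` has entries at most
`Σ α`, so the sum may be taken over functions `Fin n → Fin (Σ α + 1)`. -/
noncomputable def AtomP (n : ℕ) (α : Fin n → ℕ) : MvPolynomial (Fin n) ℂ :=
  ∑ c : Fin n → Fin ((∑ p, α p) + 1),
    if Dom n α (fun p => (c p : ℕ)) ∧ Dom n (fun p => (c p : ℕ)) (qshift n α) then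
      monomial (Finsupp.equivFunOnFinite.symm fun p => (c p : ℕ)) (1 : ℂ)
    else 0

open Module Submodule Finset

/-!
Every monomial `x^β` of `Ã_α` satisfies `α ⊴ β ⊴ qshift α`. The fundamental shift only moves
mass to the left without changing the total, so `α ⊴ qshift α` and `|qshift α| = |α|`; hence
`x^α` occurs in `Ã_α` with coefficient `1`, and every other `x^β` has `|β| = |α|` and strictly
dominates `α`. On weak compositions of a fixed size, strict dominance strictly decreases the
defect `Σ_j (|β| - β_1 - ⋯ - β_j)`, so the atoms are unitriangular in the monomial basis with
respect to a well-founded order, and therefore form a basis.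
-/

section Unitriangular

variable {ι κ R M : Type*} [LinearOrder κ] [Ring R] [AddCommGroup M] [Module R M]
  (b : Basis ι R M) {f : ι → M} (ν : ι → κ)

theorem linearIndependent_of_repr_unitriangular (hdiag : ∀ i, b.repr (f i) i = 1)
    (htri : ∀ i j, j ≠ i → b.repr (f i) j ≠ 0 → ν j < ν i) : LinearIndependent R f := by
  rw [linearIndependent_iff']
  intro s g hsum i hi
  by_contra hgi
  obtain ⟨k, hk, hmax⟩ := (s.filter (g · ≠ 0)).exists_max_image ν ⟨i, by simp [hi, hgi]⟩
  rw [Finset.mem_filter] at hk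
  have hcoeff := congrArg (fun x => b.repr x k) hsum
  simp only [map_sum, map_smul, Finsupp.coe_finsetSum, Finset.sum_apply, Finsupp.smul_apply,
    smul_eq_mul, map_zero, Finsupp.coe_zero, Pi.zero_apply] at hcoeff
  rw [Finset.sum_eq_single_of_mem k hk.1, hdiag, mul_one] at hcoeff
  · exact hk.2 hcoeff
  · intro l hl hlk
    by_contra hne
    have hgl : g l ≠ 0 := left_ne_zero_of_mul hne
    exact (hmax l (by simp [hl, hgl])).not_gt (htri l k (Ne.symm hlk) (right_ne_zero_of_mul hne))

theorem span_eq_top_of_repr_unitriangular [WellFoundedLT κ] (hdiag : ∀ i, b.repr (f i) i = 1)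
    (htri : ∀ i j, j ≠ i → b.repr (f i) j ≠ 0 → ν j < ν i) : span R (Set.range f) = ⊤ := by
  rw [eq_top_iff, ← b.span_eq, span_le, Set.range_subset_iff]
  intro i
  induction i using (InvImage.wf ν wellFounded_lt).induction with
  | _ i ih =>
  set c := b.repr (f i) - Finsupp.single i 1
  have hc : c i = 0 := by simp [c, hdiag]
  have hfi : b i = f i - Finsupp.linearCombination R b c := by
    simp [c, map_sub, b.linearCombination_repr]
  rw [hfi, Finsupp.linearCombination_apply]
  refine sub_mem (subset_span ⟨i, rfl⟩) (sum_mem fun j hj => smul_mem _ _ (ih j ?_))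
  have hji : j ≠ i := by rintro rfl; exact Finsupp.mem_support_iff.mp hj hc
  refine htri i j hji ?_
  simpa [c, Finsupp.single_eq_of_ne hji] using Finsupp.mem_support_iff.mp hj

theorem exists_basis_of_repr_unitriangular [WellFoundedLT κ] (hdiag : ∀ i, b.repr (f i) i = 1)
    (htri : ∀ i j, j ≠ i → b.repr (f i) j ≠ 0 → ν j < ν i) : ∃ c : Basis ι R M, ⇑c = f :=
  ⟨Basis.mk (linearIndependent_of_repr_unitriangular b ν hdiag htri)
    (span_eq_top_of_repr_unitriangular b ν hdiag htri).ge, Basis.coe_mk _ _⟩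

end Unitriangular

variable {n : ℕ}

def PrecededByZero (v : Fin n → ℕ) (p : Fin n) : Prop :=
  ∃ r : Fin n, (r : ℕ) + 1 = p ∧ v r = 0

def nonzeroAfter (v : Fin n → ℕ) (p : Fin n) : Finset (Fin n) :=
  univ.filter fun q => p < q ∧ v q ≠ 0

noncomputable def nextNonzero (v : Fin n → ℕ) (p : Fin n) : Fin n :=
  if h : (nonzeroAfter v p).Nonempty then (nonzeroAfter v p).min' h else p

/-- `qshift` keeps `1` at each shifted position `q` and moves the remaining `v q - 1` to the
landing position at the start of the run of zeros ending at `q - 1`; `nextNonzero v` maps the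
landing positions bijectively onto the shifted ones. -/
noncomputable def shiftedPositions (v : Fin n → ℕ) : Finset (Fin n) :=
  univ.filter fun q => v q ≠ 0 ∧ PrecededByZero v q

noncomputable def landingPositions (v : Fin n → ℕ) : Finset (Fin n) :=
  univ.filter fun p => v p = 0 ∧ ¬ PrecededByZero v p ∧ (nonzeroAfter v p).Nonempty

@[simp]
lemma mem_nonzeroAfter {v : Fin n → ℕ} {p q : Fin n} :
    q ∈ nonzeroAfter v p ↔ p < q ∧ v q ≠ 0 := by
  simp [nonzeroAfter]

lemma not_precededByZero_iff (v : Fin n → ℕ) (p : Fin n) :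
    ¬ PrecededByZero v p ↔ (p : ℕ) = 0 ∨ v ⟨(p : ℕ) - 1, by omega⟩ ≠ 0 := by
  constructor
  · intro h
    by_contra! h'
    exact h ⟨_, by simp; omega, h'.2⟩
  · rintro h ⟨r, hr, hvr⟩
    have hr' : r = ⟨(p : ℕ) - 1, by omega⟩ := Fin.ext (by simp; omega)
    rw [hr'] at hvr
    rcases h with h | h
    · omega
    · exact h hvr

lemma nextNonzero_mem {v : Fin n → ℕ} {p : Fin n} (h : (nonzeroAfter v p).Nonempty) :
    nextNonzero v p ∈ nonzeroAfter v p := by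
  rw [nextNonzero, dif_pos h]
  exact min'_mem _ h

lemma nextNonzero_le {v : Fin n → ℕ} {p q : Fin n} (hq : q ∈ nonzeroAfter v p) :
    nextNonzero v p ≤ q := by
  rw [nextNonzero, dif_pos ⟨q, hq⟩]
  exact min'_le _ _ hq

lemma eq_zero_of_lt_nextNonzero {v : Fin n → ℕ} {p r : Fin n} (hp : v p = 0) (hpr : p ≤ r)
    (hr : r < nextNonzero v p) : v r = 0 := by
  rcases hpr.eq_or_lt with rfl | hpr
  · exact hp
  · by_contra hvr
    exact (nextNonzero_le (mem_nonzeroAfter.mpr ⟨hpr, hvr⟩)).not_gt hr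

lemma lt_nextNonzero {v : Fin n → ℕ} {p : Fin n} (h : (nonzeroAfter v p).Nonempty) :
    p < nextNonzero v p :=
  (mem_nonzeroAfter.mp (nextNonzero_mem h)).1

lemma nextNonzero_lt {v : Fin n → ℕ} {p p' : Fin n} (hp : v p = 0) (hpp' : p < p')
    (hp' : ¬ PrecededByZero v p') : nextNonzero v p < p' := by
  have hr : (p' : ℕ) - 1 < n := by omega
  have hvr : v ⟨(p' : ℕ) - 1, hr⟩ ≠ 0 := fun h0 => hp' ⟨_, by simp; omega, h0⟩
  have hpr : p < ⟨(p' : ℕ) - 1, hr⟩ := by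
    refine lt_of_le_of_ne (Fin.le_def.mpr (by simp; omega)) ?_
    rintro rfl
    exact hvr hp
  exact lt_of_le_of_lt (nextNonzero_le (mem_nonzeroAfter.mpr ⟨hpr, hvr⟩))
    (Fin.lt_def.mpr (by simp; omega))

lemma nextNonzero_mem_shiftedPositions {v : Fin n → ℕ} {p : Fin n}
    (hp : p ∈ landingPositions v) : nextNonzero v p ∈ shiftedPositions v := by
  simp only [landingPositions, mem_filter, mem_univ, true_and] at hp
  obtain ⟨hp0, -, hne⟩ := hp
  have hlt := lt_nextNonzero hne
  have hr : ((nextNonzero v p : ℕ)) - 1 < n := by omega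
  refine mem_filter.mpr ⟨mem_univ _, (mem_filter.mp (nextNonzero_mem hne)).2.2,
    ⟨⟨_, hr⟩, by simp; omega, eq_zero_of_lt_nextNonzero hp0 ?_ ?_⟩⟩
  · exact Fin.le_def.mpr (by simp; omega)
  · exact Fin.lt_def.mpr (by simp; omega)

lemma injOn_nextNonzero (v : Fin n → ℕ) :
    Set.InjOn (nextNonzero v) (landingPositions v) := by
  have key : ∀ p ∈ landingPositions v, ∀ p' ∈ landingPositions v, p < p' →
      nextNonzero v p < nextNonzero v p' := by
    intro p hp p' hp' hlt
    simp only [landingPositions, mem_filter, mem_univ, true_and] at hp hp'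
    exact (nextNonzero_lt hp.1 hlt hp'.2.1).trans (lt_nextNonzero hp'.2.2)
  intro p hp p' hp' heq
  rcases lt_trichotomy p p' with hlt | heq' | hlt
  · exact absurd heq (key p hp p' hp' hlt).ne
  · exact heq'
  · exact absurd heq (key p' hp' p hp hlt).ne'

lemma exists_landingPositions_nextNonzero_eq {v : Fin n → ℕ} {q : Fin n}
    (hq : q ∈ shiftedPositions v) : ∃ p ∈ landingPositions v, nextNonzero v p = q := by
  simp only [shiftedPositions, mem_filter, mem_univ, true_and] at hq
  obtain ⟨hq0, r, hrq, hr0⟩ := hq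
  set Z := univ.filter fun r : Fin n => r < q ∧ ∀ s, r ≤ s → s < q → v s = 0
  have hrZ : r ∈ Z := by
    refine mem_filter.mpr ⟨mem_univ _, Fin.lt_def.mpr (by omega), fun s hrs hsq => ?_⟩
    rwa [show s = r from le_antisymm (Fin.le_def.mpr (by rw [Fin.lt_def] at hsq; omega)) hrs]
  obtain ⟨-, hpq, hzero⟩ := mem_filter.mp (min'_mem Z ⟨r, hrZ⟩)
  set p := Z.min' ⟨r, hrZ⟩
  have hp0 : v p = 0 := hzero p le_rfl hpq
  have hqp : q ∈ nonzeroAfter v p := by simp [nonzeroAfter, hpq, hq0]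
  have hnext : nextNonzero v p = q := by
    refine le_antisymm (nextNonzero_le hqp) (not_lt.mp fun hlt => ?_)
    exact (mem_filter.mp (nextNonzero_mem ⟨q, hqp⟩)).2.2
      (hzero _ (lt_nextNonzero ⟨q, hqp⟩).le hlt)
  refine ⟨p, mem_filter.mpr ⟨mem_univ _, hp0, ?_, ⟨q, hqp⟩⟩, hnext⟩
  rintro ⟨r', hr'p, hr'0⟩
  have hr'Z : r' ∈ Z := by
    refine mem_filter.mpr ⟨mem_univ _, ?_, fun s hr's hsq => ?_⟩
    · exact lt_trans (Fin.lt_def.mpr (by omega)) hpq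
    · rcases (Fin.le_def.mp hr's).eq_or_lt with h | h
      · rwa [show s = r' from Fin.ext h.symm]
      · exact hzero s (Fin.le_def.mpr (by omega)) hsq
  exact absurd (min'_le Z r' hr'Z) (not_le.mpr (Fin.lt_def.mpr (by omega)))

lemma image_nextNonzero_landingPositions (v : Fin n → ℕ) :
    (landingPositions v).image (nextNonzero v) = shiftedPositions v := by
  ext q
  simp only [mem_image]
  exact ⟨fun ⟨_, hp, hpq⟩ => hpq ▸ nextNonzero_mem_shiftedPositions hp,
    exists_landingPositions_nextNonzero_eq⟩

lemma sum_shiftedPositions {M : Type*} [AddCommMonoid M] (v : Fin n → ℕ) (g : Fin n → M) :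
    ∑ q ∈ shiftedPositions v, g q = ∑ p ∈ landingPositions v, g (nextNonzero v p) := by
  rw [← image_nextNonzero_landingPositions, sum_image (injOn_nextNonzero v)]

lemma qshift_add_shifted (v : Fin n → ℕ) (p : Fin n) :
    qshift n v p + (if p ∈ shiftedPositions v then v p - 1 else 0)
      = v p + (if p ∈ landingPositions v then v (nextNonzero v p) - 1 else 0) := by
  simp only [qshift, ← not_precededByZero_iff, shiftedPositions, landingPositions, nextNonzero,
    nonzeroAfter, mem_filter, mem_univ, true_and]
  split_ifs <;> simp_all
  omega

lemma sum_qshift_add (v : Fin n → ℕ) (D : Finset (Fin n)) :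
    ∑ p ∈ D, qshift n v p + ∑ q ∈ D ∩ shiftedPositions v, (v q - 1)
      = ∑ p ∈ D, v p + ∑ p ∈ D ∩ landingPositions v, (v (nextNonzero v p) - 1) := by
  simp_rw [← sum_ite_mem, ← sum_add_distrib]
  exact sum_congr rfl fun p _ => qshift_add_shifted v p

lemma sum_Iic_inter_shiftedPositions_le (v g : Fin n → ℕ) (j : Fin n) :
    ∑ q ∈ Iic j ∩ shiftedPositions v, g q
      ≤ ∑ p ∈ Iic j ∩ landingPositions v, g (nextNonzero v p) := by
  rw [inter_comm, inter_comm _ (landingPositions v), ← sum_ite_mem, ← sum_ite_mem,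
    sum_shiftedPositions v fun q => if q ∈ Iic j then g q else 0]
  refine sum_le_sum fun p hp => ?_
  have hlt : p < nextNonzero v p := lt_nextNonzero (mem_filter.mp hp).2.2.2
  split_ifs with hq hp'
  · exact le_rfl
  · exact absurd (mem_Iic.mpr (hlt.le.trans (mem_Iic.mp hq))) hp'
  · exact Nat.zero_le _
  · exact le_rfl

def partialSum (β : Fin n → ℕ) (j : Fin n) : ℕ := ∑ p ∈ Iic j, β p

lemma dom_iff {β γ : Fin n → ℕ} : Dom n β γ ↔ ∀ j, partialSum β j ≤ partialSum γ j := by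
  simp [Dom, partialSum, filter_ge_eq_Iic]

lemma dom_qshift_self (v : Fin n → ℕ) : Dom n v (qshift n v) := by
  refine dom_iff.mpr fun j => ?_
  have h := sum_qshift_add v (Iic j)
  have := sum_Iic_inter_shiftedPositions_le v (fun q => v q - 1) j
  rw [partialSum, partialSum]
  omega

lemma sum_qshift (v : Fin n → ℕ) : ∑ p, qshift n v p = ∑ p, v p := by
  have h := sum_qshift_add v univ
  rw [univ_inter, univ_inter, sum_shiftedPositions v fun q => v q - 1] at h
  omega

lemma Dom.refl (β : Fin n → ℕ) : Dom n β β := fun _ => le_rfl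

lemma partialSum_le_sum (β : Fin n → ℕ) (j : Fin n) : partialSum β j ≤ ∑ p, β p :=
  sum_le_sum_of_subset (subset_univ _)

lemma Dom.sum_le {β γ : Fin n → ℕ} (h : Dom n β γ) : ∑ p, β p ≤ ∑ p, γ p := by
  cases n with
  | zero => simp
  | succ m => simpa [partialSum, ← Fin.top_eq_last] using dom_iff.mp h (Fin.last m)

lemma Dom.antisymm {β γ : Fin n → ℕ} (h₁ : Dom n β γ) (h₂ : Dom n γ β) : β = γ := by
  funext j
  induction j using WellFoundedLT.induction with
  | _ j ih =>
  have hlt : ∑ p ∈ Iio j, β p = ∑ p ∈ Iio j, γ p := sum_congr rfl fun p hp => ih p (mem_Iio.mp hp)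
  have h₁j := dom_iff.mp h₁ j
  have h₂j := dom_iff.mp h₂ j
  simp only [partialSum, ← Iio_insert, sum_insert notMem_Iio_self, hlt] at h₁j h₂j
  omega

def dominanceDefect (β : Fin n → ℕ) : ℕ := ∑ j, (∑ p, β p - partialSum β j)

lemma Dom.dominanceDefect_lt {β γ : Fin n → ℕ} (h : Dom n β γ) (hne : β ≠ γ)
    (hsum : ∑ p, β p = ∑ p, γ p) : dominanceDefect γ < dominanceDefect β := by
  obtain ⟨j, hj⟩ : ∃ j, partialSum β j < partialSum γ j := by
    by_contra! hle
    exact hne (h.antisymm (dom_iff.mpr hle))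
  refine sum_lt_sum (fun i _ => ?_) ⟨j, mem_univ j, ?_⟩
  · have := dom_iff.mp h i
    have := partialSum_le_sum γ i
    omega
  · have := partialSum_le_sum γ j
    omega

lemma coeff_AtomP (α β : Fin n → ℕ) :
    coeff (Finsupp.equivFunOnFinite.symm β) (AtomP n α)
      = if (∀ p, β p ≤ ∑ q, α q) ∧ Dom n α β ∧ Dom n β (qshift n α) then 1 else 0 := by
  simp only [AtomP, coeff_sum, apply_ite (coeff _), coeff_monomial, coeff_zero,
    EmbeddingLike.apply_eq_iff_eq]
  by_cases hβ : ∀ p, β p ≤ ∑ q, α q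
  · set c₀ : Fin n → Fin ((∑ q, α q) + 1) := fun p => ⟨β p, Nat.lt_succ_of_le (hβ p)⟩
    have hc : ∀ c : Fin n → Fin ((∑ q, α q) + 1), (fun p => (c p : ℕ)) = β ↔ c = c₀ := fun c =>
      ⟨fun h => funext fun p => Fin.ext (congrFun h p), fun h => h ▸ rfl⟩
    have hc₀ : (fun p => (c₀ p : ℕ)) = β := rfl
    rw [Fintype.sum_eq_single c₀ fun c hne => by simp [hc, hne], hc₀]
    simp [hβ]
  · rw [if_neg (fun h => hβ h.1)]
    refine sum_eq_zero fun c _ => ?_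
    have : (fun p => (c p : ℕ)) ≠ β := fun h => hβ fun p => h ▸ Nat.le_of_lt_succ (c p).isLt
    simp [this]

lemma coeff_AtomP_self (α : Fin n → ℕ) :
    coeff (Finsupp.equivFunOnFinite.symm α) (AtomP n α) = 1 := by
  rw [coeff_AtomP, if_pos ⟨fun p => single_le_sum (fun _ _ => Nat.zero_le _) (mem_univ p),
    Dom.refl α, dom_qshift_self α⟩]

lemma dominanceDefect_lt_of_coeff_AtomP_ne_zero {α β : Fin n → ℕ} (hne : β ≠ α)
    (h : coeff (Finsupp.equivFunOnFinite.symm β) (AtomP n α) ≠ 0) :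
    dominanceDefect β < dominanceDefect α := by
  rw [coeff_AtomP] at h
  obtain ⟨-, hαβ, hβ⟩ := (ite_ne_right_iff.mp h).1
  exact hαβ.dominanceDefect_lt hne.symm
    (le_antisymm hαβ.sum_le (hβ.sum_le.trans (sum_qshift α).le))

/-- the fundamental Demazure atoms `{Ã_α}`, indexed by weak
compositions `α` of length `n`, form a basis of the polynomial ring
`ℂ[x₁,…,xₙ]`. -/
theorem fundamental_atoms_basis (n : ℕ) :
    ∃ b : Module.Basis (Fin n → ℕ) ℂ (MvPolynomial (Fin n) ℂ), ∀ α, b α = AtomP n α := by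
  let monomials := (basisMonomials (Fin n) ℂ).reindex Finsupp.equivFunOnFinite
  have hrepr : ∀ x β, monomials.repr x β = coeff (Finsupp.equivFunOnFinite.symm β) x :=
    fun _ _ => rfl
  obtain ⟨b, hb⟩ := exists_basis_of_repr_unitriangular monomials dominanceDefect
    (fun α => by rw [hrepr, coeff_AtomP_self])
    (fun α β hne h => dominanceDefect_lt_of_coeff_AtomP_ne_zero hne (by rwa [hrepr] at h))
  exact ⟨b, congrFun hb⟩
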